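/- In the setting of the previous statement (Q = coker(φ^∨) for φ : M → N a map of finite free R-modules), under the natural bijection Hom_A(Q ⊗_R A, A) ≅ ker(φ ⊗_R A), a homomorphism Q ⊗_R A → A is surjective if and only if the corresponding element of ker(φ ⊗_R A) ⊆ M ⊗_R A has nonzero image in M ⊗_R κ(p) for every prime ideal p of A. -/

import Mathlib

open TensorProduct

/-- The residue field `κ(p)` of a commutative ring at a prime ideal `p`. -/
abbrev ResidueFieldAt {A : Type} [CommRing A] (p : Ideal A) [p.IsPrime] : Type :=
  IsLocalRing.ResidueField (Localization.AtPrime p)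

/-- The evaluation pairing: a functional `ξ : M → R` induces, for any `R`-algebra `A`,
a map `M ⊗_R A → A` (written with the algebra factor on the left). -/
noncomputable def evalPairing (R A M : Type) [CommRing R] [CommRing A] [Algebra R A]
    [AddCommGroup M] [Module R M] (ξ : Module.Dual R M) : (A ⊗[R] M) →ₗ[R] A :=
  TensorProduct.lift ((LinearMap.mul R A).compl₂ ((Algebra.linearMap R A) ∘ₗ ξ))

/-- The `R`-linear residue map `A → κ(p)` at a prime `p` of an `R`-algebra `A`. -/
noncomputable def residueLinearMap {R A : Type} [CommRing R] [CommRing A] [Algebra R A]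
    (p : Ideal A) [p.IsPrime] : A →ₗ[R] ResidueFieldAt p :=
  (IsScalarTower.toAlgHom R A (ResidueFieldAt p)).toLinearMap

/-! Write `x ∈ A ⊗ M` for the element corresponding to `ψ`. The image of `ψ` is the ideal
generated by the values `ψ (1 ⊗ [ξ]) = ⟨ξ, x⟩` for `ξ ∈ M^∨`, so `ψ` is surjective iff no prime
contains all of them. Since `M` is free, an element of `κ(p) ⊗ M` is zero iff all its pairings
with `M^∨` vanish, and the pairings of the image of `x` are the residues of the `⟨ξ, x⟩`; so
`x` vanishes at `p` exactly when `p` contains all `⟨ξ, x⟩`. -/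

lemma LinearMap.range_eq_span_one_tmul {R A P : Type*} [CommSemiring R] [CommSemiring A]
    [Algebra R A] [AddCommMonoid P] [Module R P] (ψ : A ⊗[R] P →ₗ[A] A) :
    LinearMap.range ψ = Ideal.span (Set.range fun p => ψ (1 ⊗ₜ p)) := by
  refine le_antisymm ?_ (Ideal.span_le.2 <| Set.range_subset_iff.2 fun p => ⟨_, rfl⟩)
  rintro _ ⟨y, rfl⟩
  induction y using TensorProduct.induction_on with
  | zero => simp
  | tmul a p =>
    rw [← mul_one a, ← smul_eq_mul, ← TensorProduct.smul_tmul', map_smul]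
    exact Ideal.mul_mem_left _ _ (Ideal.subset_span ⟨p, rfl⟩)
  | add y z hy hz => rw [map_add]; exact add_mem hy hz

lemma Ideal.span_eq_top_iff_forall_isPrime {A : Type*} [CommSemiring A] (s : Set A) :
    Ideal.span s = ⊤ ↔ ∀ (p : Ideal A) [p.IsPrime], ¬ s ⊆ p := by
  refine ⟨fun h p hp hs => hp.ne_top (top_le_iff.1 (h ▸ Ideal.span_le.2 hs)), fun h => ?_⟩
  by_contra hne
  obtain ⟨m, hm, hle⟩ := Ideal.exists_le_maximal _ hne
  exact h m (Ideal.subset_span.trans hle)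

section EvalPairing

variable {R A M : Type} [CommRing R] [CommRing A] [Algebra R A] [AddCommGroup M] [Module R M]

@[simp]
lemma evalPairing_tmul (ξ : Module.Dual R M) (a : A) (m : M) :
    evalPairing R A M ξ (a ⊗ₜ[R] m) = a * algebraMap R A (ξ m) := by
  simp [evalPairing]

lemma evalPairing_rTensor {K : Type} [CommRing K] [Algebra R K] (g : A →ₐ[R] K)
    (ξ : Module.Dual R M) (x : A ⊗[R] M) :
    evalPairing R K M ξ (g.toLinearMap.rTensor M x) = g (evalPairing R A M ξ x) := by
  induction x using TensorProduct.induction_on with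
  | zero => simp
  | tmul a m => simp
  | add x y hx hy => simp [hx, hy]

lemma basis_repr_eq_evalPairing {ι : Type} (b : Module.Basis ι R M) (x : A ⊗[R] M) (i : ι) :
    (Algebra.TensorProduct.basis A b).repr x i = evalPairing R A M (b.coord i) x := by
  induction x using TensorProduct.induction_on with
  | zero => simp
  | tmul a m => simp
  | add x y hx hy => simp [hx, hy]

lemma eq_zero_of_forall_evalPairing_eq_zero [Module.Free R M] {x : A ⊗[R] M}
    (hx : ∀ ξ, evalPairing R A M ξ x = 0) : x = 0 := by
  let b := Algebra.TensorProduct.basis A (Module.Free.chooseBasis R M)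
  refine b.repr.injective (Finsupp.ext fun i => ?_)
  rw [basis_repr_eq_evalPairing, hx, map_zero, Finsupp.zero_apply]

lemma residueLinearMap_eq_zero_iff (p : Ideal A) [p.IsPrime] {a : A} :
    residueLinearMap (R := R) p a = 0 ↔ a ∈ p := by
  simp [residueLinearMap,
    IsScalarTower.algebraMap_apply A (Localization.AtPrime p) (ResidueFieldAt p),
    IsLocalization.AtPrime.isUnit_to_map_iff (Localization.AtPrime p) p]

lemma rTensor_residueLinearMap_eq_zero_iff [Module.Free R M] (p : Ideal A) [p.IsPrime]
    (x : A ⊗[R] M) :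
    (residueLinearMap p).rTensor M x = 0 ↔ ∀ ξ, evalPairing R A M ξ x ∈ p := by
  have pairing (ξ : Module.Dual R M) : evalPairing R _ M ξ ((residueLinearMap p).rTensor M x) =
      residueLinearMap (R := R) p (evalPairing R A M ξ x) :=
    evalPairing_rTensor _ ξ x
  refine ⟨fun h ξ => ?_, fun h => eq_zero_of_forall_evalPairing_eq_zero fun ξ => ?_⟩
  · rw [← residueLinearMap_eq_zero_iff (R := R), ← pairing, h, map_zero]
  · rw [pairing, residueLinearMap_eq_zero_iff]
    exact h ξ

end EvalPairing

theorem surjective_iff_corresponding_element_nowhere_vanishing_general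
    {R M N : Type} [CommRing R]
    [AddCommGroup M] [Module R M] [Module.Free R M]
    [AddCommGroup N] [Module R N]
    (φ : M →ₗ[R] N)
    (A : Type) [CommRing A] [Algebra R A]
    (e : ((A ⊗[R] (Module.Dual R M ⧸ LinearMap.range φ.dualMap)) →ₗ[A] A) ≃
          LinearMap.ker (LinearMap.baseChange A φ))
    (he : ∀ (ψ : (A ⊗[R] (Module.Dual R M ⧸ LinearMap.range φ.dualMap)) →ₗ[A] A)
        (ξ : Module.Dual R M),
        ψ ((1 : A) ⊗ₜ[R] Submodule.Quotient.mk ξ) = evalPairing R A M ξ (e ψ : A ⊗[R] M))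
    (ψ : (A ⊗[R] (Module.Dual R M ⧸ LinearMap.range φ.dualMap)) →ₗ[A] A) :
    Function.Surjective ψ ↔
      ∀ (p : Ideal A) [p.IsPrime],
        LinearMap.rTensor M (residueLinearMap p) (e ψ : A ⊗[R] M) ≠ 0 := by
  rw [← LinearMap.range_eq_top, LinearMap.range_eq_span_one_tmul,
    ← (Submodule.Quotient.mk_surjective _).range_comp, Ideal.span_eq_top_iff_forall_isPrime]
  refine forall_congr' fun p => forall_congr' fun _ => ?_
  simp only [Set.range_subset_iff, Function.comp_apply, he, ne_eq,
    rTensor_residueLinearMap_eq_zero_iff, SetLike.mem_coe]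

/-- Let `φ : M → N` be a map of finite free modules over a commutative ring `R`, let
`Q = coker(φ^∨ : N^∨ → M^∨)` and let `A` be an `R`-algebra.  Under the natural bijection
`Hom_A(Q ⊗_R A, A) ≅ ker(φ ⊗_R A)` (characterized by the evaluation pairing), a homomorphism
`ψ : Q ⊗_R A → A` is surjective if and only if the corresponding element of
`ker(φ ⊗_R A) ⊆ M ⊗_R A` has nonzero image in `M ⊗_R κ(p)` for every prime ideal `p`
of `A`. -/
theorem surjective_iff_corresponding_element_nowhere_vanishing
    {R M N : Type} [CommRing R]
    [AddCommGroup M] [Module R M] [Module.Free R M] [Module.Finite R M]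
    [AddCommGroup N] [Module R N] [Module.Free R N] [Module.Finite R N]
    (φ : M →ₗ[R] N)
    (A : Type) [CommRing A] [Algebra R A]
    (e : ((A ⊗[R] (Module.Dual R M ⧸ LinearMap.range φ.dualMap)) →ₗ[A] A) ≃
          LinearMap.ker (LinearMap.baseChange A φ))
    (he : ∀ (ψ : (A ⊗[R] (Module.Dual R M ⧸ LinearMap.range φ.dualMap)) →ₗ[A] A)
        (ξ : Module.Dual R M),
        ψ ((1 : A) ⊗ₜ[R] Submodule.Quotient.mk ξ) = evalPairing R A M ξ (e ψ : A ⊗[R] M))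
    (ψ : (A ⊗[R] (Module.Dual R M ⧸ LinearMap.range φ.dualMap)) →ₗ[A] A) :
    Function.Surjective ψ ↔
      ∀ (p : Ideal A) [p.IsPrime],
        LinearMap.rTensor M (residueLinearMap p) (e ψ : A ⊗[R] M) ≠ 0 :=
  surjective_iff_corresponding_element_nowhere_vanishing_general φ A e he ψ
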